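/- With the extension setup below, if the metric subspace (T′, d|_{T′×T′}) satisfies (MC′) and the right K-vector space V is finite-dimensional, then the metric space (S, d) satisfies (MC′). -/

import Mathlib

/-- `2 ^ (-a)` for `a ∈ ℝ ∪ {∞}`, with the convention `2 ^ (-∞) = 0`. -/
noncomputable def toDist (a : WithTop ℝ) : ℝ :=
  WithTop.recTopCoe 0 (fun r : ℝ => (2 : ℝ) ^ (-r)) a

/-- Property (MC′) for a distance function `d` on `X`: every nested sequence of c-balls
(closed balls of positive radius) has nonempty intersection. -/
def MCprime {X : Type*} (d : X → X → ℝ) : Prop :=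
  ∀ (c : ℕ → X) (r : ℕ → ℝ),
    (∀ n, 0 < r n) →
    (∀ n, {y | d (c (n + 1)) y ≤ r (n + 1)} ⊆ {y | d (c n) y ≤ r n}) →
    (⋂ n, {y | d (c n) y ≤ r n}).Nonempty

/-- Property (MC′) for the metric subspace on `A ⊆ X` induced by `d`. -/
def MCprimeOn {X : Type*} (d : X → X → ℝ) (A : Set X) : Prop :=
  ∀ (c : ℕ → X) (r : ℕ → ℝ),
    (∀ n, c n ∈ A) → (∀ n, 0 < r n) →
    (∀ n, {y ∈ A | d (c (n + 1)) y ≤ r (n + 1)} ⊆ {y ∈ A | d (c n) y ≤ r n}) →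
    (⋂ n, {y ∈ A | d (c n) y ≤ r n}).Nonempty

/-!
Work with pseudo-Cauchy sequences: `(x n)` with nondecreasing levels `β n ≤ ω (x n - x (n+1))`.
In an ultrametric space, (MC′) says exactly that these have pseudo-limits `y`, i.e.
`β n ≤ ω (x n - y)` for all `n`.

Induct along a basis `b` of `V`: the preimage under `π` of the span of `b 0, …, b j` is a
one-dimensional extension, via the `j`-th coordinate `f : S → K`, of the preimage of the span of
`b 0, …, b (j-1)`. In such a step, pseudo-limits in the kernel of `f` give an element `e` of
maximal `ω` in the fibre `f⁻¹ 1`. Scaling by `⊙` then gives `ω x ≤ ω e + m ν (f x)`, and the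
fibre over `k` contains a point `y` with `ω (x - y) = ω e + m ν (f x - k)`. A
pseudo-Cauchy sequence therefore projects to nested balls of `K`, whose common point `k₀` lifts
to a pseudo-Cauchy sequence in the fibre over `k₀`. That fibre is a translate of the kernel, so
the lifted sequence has a pseudo-limit, and this is also a pseudo-limit of the original sequence.
-/

theorem toDist_le_two_rpow_neg_iff {a : WithTop ℝ} {ρ : ℝ} :
    toDist a ≤ 2 ^ (-ρ) ↔ (ρ : WithTop ℝ) ≤ a := by
  cases a with
  | top => simpa [toDist] using by positivity
  | coe r =>
    simp only [toDist, WithTop.recTopCoe_coe, WithTop.coe_le_coe,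
      Real.rpow_le_rpow_left_iff one_lt_two, neg_le_neg_iff]

theorem toDist_le_iff {a : WithTop ℝ} {r : ℝ} (hr : 0 < r) :
    toDist a ≤ r ↔ ((-Real.logb 2 r : ℝ) : WithTop ℝ) ≤ a := by
  rw [← toDist_le_two_rpow_neg_iff, neg_neg, Real.rpow_logb two_pos (by norm_num) hr]

structure IsGroupValuation {S : Type*} [AddGroup S] (ω : S → WithTop ℝ) : Prop where
  eq_top_iff : ∀ x, ω x = ⊤ ↔ x = 0
  neg : ∀ x, ω (-x) = ω x
  min_le_add : ∀ x y, min (ω x) (ω y) ≤ ω (x + y)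

def HasPseudoLimits {S : Type*} [AddGroup S] (ω : S → WithTop ℝ) (A : Set S) : Prop :=
  ∀ (x : ℕ → S) (β : ℕ → ℝ), (∀ n, x n ∈ A) → Monotone β →
    (∀ n, (β n : WithTop ℝ) ≤ ω (x n + -x (n + 1))) →
    ∃ y ∈ A, ∀ n, (β n : WithTop ℝ) ≤ ω (x n + -y)

namespace IsGroupValuation

variable {S : Type*} [AddGroup S] {ω : S → WithTop ℝ}

theorem map_zero (hω : IsGroupValuation ω) : ω 0 = ⊤ := (hω.eq_top_iff 0).2 rfl

theorem ne_top (hω : IsGroupValuation ω) {x : S} (hx : x ≠ 0) : ω x ≠ ⊤ :=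
  fun h => hx ((hω.eq_top_iff x).1 h)

theorem comm (hω : IsGroupValuation ω) (a b : S) : ω (a + -b) = ω (b + -a) := by
  rw [← hω.neg, neg_add_rev, neg_neg]

theorem le_add {β : WithTop ℝ} (hω : IsGroupValuation ω) {a b : S} (ha : β ≤ ω a)
    (hb : β ≤ ω b) : β ≤ ω (a + b) :=
  (le_min ha hb).trans (hω.min_le_add a b)

theorem triangle {β : WithTop ℝ} (hω : IsGroupValuation ω) {a b c : S} (hab : β ≤ ω (a + -b))
    (hbc : β ≤ ω (b + -c)) : β ≤ ω (a + -c) := by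
  simpa [add_assoc] using hω.le_add hab hbc

theorem hasPseudoLimits_of_mcprimeOn (hω : IsGroupValuation ω) {A : Set S}
    (hA : MCprimeOn (fun x y : S => toDist (ω (x + -y))) A) : HasPseudoLimits ω A := by
  intro x β hxA hβ hx
  obtain ⟨y, hy⟩ := hA x (fun n => 2 ^ (-β n)) hxA (fun n => by positivity) fun n z hz => by
    simp only [Set.mem_ofPred_eq, toDist_le_two_rpow_neg_iff] at hz ⊢
    exact ⟨hz.1, hω.triangle (hx n) ((WithTop.coe_le_coe.2 (hβ n.le_succ)).trans hz.2)⟩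
  simp only [Set.mem_iInter, Set.mem_ofPred_eq, toDist_le_two_rpow_neg_iff] at hy
  exact ⟨y, (hy 0).1, fun n => (hy n).2⟩

/-- Passing to the running maxima of the levels turns nested balls into a pseudo-Cauchy
sequence of centres. -/
theorem mcprime_of_hasPseudoLimits (hω : IsGroupValuation ω)
    (h : HasPseudoLimits ω Set.univ) : MCprime (fun x y : S => toDist (ω (x + -y))) := by
  intro c r hr hnest
  set ρ : ℕ → ℝ := fun n => -Real.logb 2 (r n)
  have hball : ∀ n y, toDist (ω (c n + -y)) ≤ r n ↔ (ρ n : WithTop ℝ) ≤ ω (c n + -y) :=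
    fun n y => toDist_le_iff (hr n)
  have hmem : ∀ k n, k ≤ n → (ρ k : WithTop ℝ) ≤ ω (c k + -c n) := by
    intro k n hkn
    have hcn : toDist (ω (c n + -c n)) ≤ r n := by
      simpa [hω.map_zero, toDist] using (hr n).le
    have hanti := antitone_nat_of_succ_le (f := fun n => {y | toDist (ω (c n + -y)) ≤ r n}) hnest
    exact (hball k _).1 (hanti hkn hcn)
  have hsucc : ∀ n, (partialSups ρ n : WithTop ℝ) ≤ ω (c n + -c (n + 1)) := by
    intro n
    refine (partialSups_iff_forall (fun a : ℝ => (a : WithTop ℝ) ≤ ω (c n + -c (n + 1)))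
      (by simp only [WithTop.coe_sup, sup_le_iff, implies_true])).2 fun k hkn => ?_
    exact hω.triangle (by rw [hω.comm]; exact hmem k n hkn) (hmem k (n + 1) (by omega))
  obtain ⟨y, -, hy⟩ := h c (partialSups ρ) (fun _ => trivial) (partialSups ρ).monotone hsucc
  refine ⟨y, Set.mem_iInter.2 fun n => (hball n y).2 ?_⟩
  exact (WithTop.coe_le_coe.2 (le_partialSups ρ n)).trans (hy n)

end IsGroupValuation

namespace HasPseudoLimits

variable {S : Type*} [AddGroup S] {ω : S → WithTop ℝ}

theorem fiber {G : Type*} [AddGroup G] {A : AddSubgroup S} {f : S →+ G}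
    (h : HasPseudoLimits ω {x ∈ A | f x = 0}) {x₀ : S} (hx₀ : x₀ ∈ A) :
    HasPseudoLimits ω {x ∈ A | f x = f x₀} := by
  intro x β hx hβ hxβ
  obtain ⟨u, ⟨huA, hu0⟩, hu⟩ := h (fun n => x n + -x₀) β
    (fun n => ⟨A.add_mem (hx n).1 (A.neg_mem hx₀), by simp [(hx n).2]⟩) hβ
    (fun n => by simpa [add_assoc] using hxβ n)
  exact ⟨u + x₀, ⟨A.add_mem huA hx₀, by simp [hu0]⟩, fun n => by simpa [add_assoc] using hu n⟩

theorem exists_forall_le (hω : IsGroupValuation ω) {F : Set S} (h : HasPseudoLimits ω F)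
    {x : ℕ → S} {β : ℕ → ℝ} (hx : ∀ n, x n ∈ F) (hβ : Monotone β)
    (hxβ : ∀ n, (β n : WithTop ℝ) ≤ ω (x n)) : ∃ e ∈ F, ∀ n, (β n : WithTop ℝ) ≤ ω e := by
  obtain ⟨e, heF, he⟩ := h x β hx hβ fun n =>
    hω.le_add (hxβ n) (by rw [hω.neg]; exact (WithTop.coe_le_coe.2 (hβ n.le_succ)).trans (hxβ _))
  refine ⟨e, heF, fun n => ?_⟩
  have := hω.le_add ((he n).trans_eq (hω.neg _).symm) (hxβ n)
  rwa [neg_add_rev, neg_neg, neg_add_cancel_right] at this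

theorem exists_max (hω : IsGroupValuation ω) {F : Set S} (h : HasPseudoLimits ω F)
    (hne : F.Nonempty) (h0 : (0 : S) ∉ F) : ∃ e ∈ F, ∀ x ∈ F, ω x ≤ ω e := by
  have hreal : ∀ x ∈ F, ∃ v : ℝ, ω x = v := fun x hx =>
    (WithTop.ne_top_iff_exists.1 (hω.ne_top (ne_of_mem_of_not_mem hx h0))).imp fun _ => Eq.symm
  set R : Set ℝ := {v | ∃ x ∈ F, ω x = v}
  have hRne : R.Nonempty := let ⟨x, hx⟩ := hne; (hreal x hx).imp fun v hv => ⟨x, hx, hv⟩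
  have hbdd : BddAbove R := by
    by_contra hR
    choose v hvR hv using not_bddAbove_iff.1 hR
    choose x hxF hxv using fun n : ℕ => hvR n
    obtain ⟨e, heF, he⟩ := h.exists_forall_le hω hxF (fun _ _ => Nat.cast_le.2)
      fun n => hxv n ▸ WithTop.coe_le_coe.2 (hv n).le
    obtain ⟨w, hw⟩ := hreal e heF
    obtain ⟨n, hn⟩ := exists_nat_gt w
    exact hn.not_ge (WithTop.coe_le_coe.1 (hw ▸ he n))
  obtain ⟨u, hu, -, hlim, huR⟩ := (isLUB_csSup hRne hbdd).exists_seq_monotone_tendsto hRne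
  choose x hxF hxu using huR
  obtain ⟨e, heF, he⟩ := h.exists_forall_le hω hxF hu fun n => (hxu n).ge
  obtain ⟨w, hw⟩ := hreal e heF
  refine ⟨e, heF, fun y hy => ?_⟩
  obtain ⟨v, hv⟩ := hreal y hy
  rw [hv, hw, WithTop.coe_le_coe]
  exact (le_csSup hbdd ⟨y, hy, hv⟩).trans
    (le_of_tendsto' hlim fun n => WithTop.coe_le_coe.1 (hw ▸ he n))

end HasPseudoLimits

theorem coe_sub_div_le_iff {m μ ρ : ℝ} (hm : 0 < m) (a : WithTop ℝ) :
    (((ρ - μ) / m : ℝ) : WithTop ℝ) ≤ a ↔ (ρ : WithTop ℝ) ≤ μ + m * a := by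
  cases a with
  | top => simp [WithTop.mul_top (WithTop.coe_ne_zero.2 hm.ne')]
  | coe a =>
    rw [← WithTop.coe_mul, ← WithTop.coe_add, WithTop.coe_le_coe, WithTop.coe_le_coe,
      div_le_iff₀ hm]
    constructor <;> intro h <;> linarith

section Extension

variable {K S : Type*} [DivisionRing K] [AddGroup S] {ω : S → WithTop ℝ} {ν : K → WithTop ℝ}
  {smul : S → K → S} {m μ : ℝ} {A : AddSubgroup S} {f : S →+ K} {e : S}

/-- The balls of `K` around `f (c n)` are nested because each of their points lifts into the
corresponding ball of `S`. -/
theorem exists_forall_le_add_mul_sub (hω : IsGroupValuation ω)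
    (hνsph : MCprime (fun x y : K => toDist (ν (x - y)))) (hm : 0 < m)
    (hupper : ∀ x ∈ A, ω x ≤ μ + m * ν (f x))
    (hlower : ∀ x ∈ A, ∀ k, ∃ y ∈ A, f y = k ∧ ω (x + -y) = μ + m * ν (f x - k))
    {c : ℕ → S} {ρ : ℕ → ℝ} (hc : ∀ n, c n ∈ A) (hρ : Monotone ρ)
    (hcρ : ∀ n, (ρ n : WithTop ℝ) ≤ ω (c n + -c (n + 1))) :
    ∃ k₀, ∀ n, (ρ n : WithTop ℝ) ≤ μ + m * ν (f (c n) - k₀) := by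
  obtain ⟨k₀, hk₀⟩ := hνsph (fun n => f (c n)) (fun n => 2 ^ (-((ρ n - μ) / m)))
    (fun n => by positivity) fun n k hk => by
      simp only [Set.mem_ofPred_eq, toDist_le_two_rpow_neg_iff, coe_sub_div_le_iff hm] at hk ⊢
      obtain ⟨y, hyA, rfl, hy⟩ := hlower _ (hc (n + 1)) k
      have hρy : (ρ n : WithTop ℝ) ≤ ω (c n + -y) :=
        hω.triangle (hcρ n) ((WithTop.coe_le_coe.2 (hρ n.le_succ)).trans (hk.trans_eq hy.symm))
      simpa [sub_eq_add_neg] using hρy.trans (hupper _ (A.add_mem (hc n) (A.neg_mem hyA)))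
  simp only [Set.mem_iInter, Set.mem_ofPred_eq, toDist_le_two_rpow_neg_iff,
    coe_sub_div_le_iff hm] at hk₀
  exact ⟨k₀, hk₀⟩

theorem HasPseudoLimits.of_ker (hω : IsGroupValuation ω)
    (hνsph : MCprime (fun x y : K => toDist (ν (x - y)))) (hm : 0 < m)
    (hupper : ∀ x ∈ A, ω x ≤ μ + m * ν (f x))
    (hlower : ∀ x ∈ A, ∀ k, ∃ y ∈ A, f y = k ∧ ω (x + -y) = μ + m * ν (f x - k))
    (hker : HasPseudoLimits ω {x ∈ A | f x = 0}) : HasPseudoLimits ω A := by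
  intro c ρ hc hρ hcρ
  obtain ⟨k₀, hk₀⟩ := exists_forall_le_add_mul_sub hω hνsph hm hupper hlower hc hρ hcρ
  choose y hyA hyk₀ hy using fun n => hlower _ (hc n) k₀
  have hcy : ∀ n, (ρ n : WithTop ℝ) ≤ ω (c n + -y n) := fun n => (hk₀ n).trans_eq (hy n).symm
  obtain ⟨z, ⟨hzA, -⟩, hz⟩ := hker.fiber (hyA 0) y ρ (fun n => ⟨hyA n, by rw [hyk₀, hyk₀]⟩) hρ
    fun n => hω.triangle ((hcy n).trans_eq (hω.comm _ _)) (hω.triangle (hcρ n)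
      ((WithTop.coe_le_coe.2 (hρ n.le_succ)).trans (hcy (n + 1))))
  exact ⟨z, hzA, fun n => hω.triangle (hcy n) (hz n)⟩

theorem HasPseudoLimits.of_ker_of_smul (hω : IsGroupValuation ω) (hν0 : ν 0 = ⊤)
    (hνsph : MCprime (fun x y : K => toDist (ν (x - y))))
    (hs3 : ∀ (x : S) (k l : K), smul (smul x k) l = smul x (k * l)) (hs4 : ∀ x, smul x 1 = x)
    (hm : 0 < m) (hω2 : ∀ x l, ω (smul x l) = ω x + m * ν l)
    (hA : ∀ x ∈ A, ∀ l, smul x l ∈ A) (hf : ∀ x l, f (smul x l) = f x * l)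
    (heA : e ∈ A) (he : f e = 1) (hker : HasPseudoLimits ω {x ∈ A | f x = 0}) :
    HasPseudoLimits ω A := by
  obtain ⟨e', ⟨he'A, he'⟩, hmax⟩ := (hker.fiber heA).exists_max hω ⟨e, heA, rfl⟩
    fun h => by simp [he] at h
  rw [he] at he' hmax
  obtain ⟨μ, hμ⟩ := WithTop.ne_top_iff_exists.1 (hω.ne_top (x := e') (by rintro rfl; simp at he'))
  have hupper : ∀ x ∈ A, ω x ≤ μ + m * ν (f x) := by
    intro x hx
    by_cases hx0 : f x = 0
    · simp [hx0, hν0, WithTop.mul_top (WithTop.coe_ne_zero.2 hm.ne')]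
    have hx' : ω (smul x (f x)⁻¹) ≤ μ :=
      hμ ▸ hmax _ ⟨hA x hx _, by rw [hf, mul_inv_cancel₀ hx0]⟩
    calc ω x = ω (smul (smul x (f x)⁻¹) (f x)) := by rw [hs3, inv_mul_cancel₀ hx0, hs4]
      _ ≤ μ + m * ν (f x) := by rw [hω2]; exact add_le_add_left hx' _
  refine of_ker hω hνsph hm hupper (fun x hx k => ?_) hker
  refine ⟨-smul e' (f x - k) + x, A.add_mem (A.neg_mem (hA _ he'A _)) hx, by simp [hf, he'], ?_⟩
  rw [neg_add_rev, neg_neg, add_neg_cancel_left, hω2, hμ]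

end Extension

section Coordinates

variable {K : Type*} [DivisionRing K] {V : Type*} [AddCommGroup V] [Module Kᵐᵒᵖ V] {n : ℕ}

/-- The span of the first `j` vectors of `b`. -/
noncomputable def kerCoordsFrom (b : Module.Basis (Fin n) Kᵐᵒᵖ V) (j : ℕ) : Submodule Kᵐᵒᵖ V :=
  ⨅ (i : Fin n) (_ : j ≤ (i : ℕ)), LinearMap.ker (b.coord i)

theorem mem_kerCoordsFrom {b : Module.Basis (Fin n) Kᵐᵒᵖ V} {j : ℕ} {v : V} :
    v ∈ kerCoordsFrom b j ↔ ∀ i : Fin n, j ≤ (i : ℕ) → b.coord i v = 0 := by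
  simp [kerCoordsFrom]

theorem mem_kerCoordsFrom_iff_succ {b : Module.Basis (Fin n) Kᵐᵒᵖ V} {j : ℕ} (hj : j < n)
    {v : V} : v ∈ kerCoordsFrom b j ↔ v ∈ kerCoordsFrom b (j + 1) ∧ b.coord ⟨j, hj⟩ v = 0 := by
  simp only [mem_kerCoordsFrom]
  constructor
  · exact fun hv => ⟨fun i hi => hv i (by omega), hv _ le_rfl⟩
  · rintro ⟨hv, hvj⟩ i hi
    rcases hi.eq_or_lt with h | h
    · rwa [show i = ⟨j, hj⟩ from Fin.ext h.symm]
    · exact hv i h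

theorem basis_mem_kerCoordsFrom_succ (b : Module.Basis (Fin n) Kᵐᵒᵖ V) (i : Fin n) :
    b i ∈ kerCoordsFrom b (i + 1) := by
  rw [mem_kerCoordsFrom]
  intro i' hi'
  rw [b.coord_apply, b.repr_self, Finsupp.single_eq_of_ne]
  exact fun h => (Nat.lt_of_succ_le hi').ne' (congrArg Fin.val h)

theorem hasPseudoLimits_comap_kerCoordsFrom {S : Type*} [AddGroup S] {ω : S → WithTop ℝ}
    {ν : K → WithTop ℝ} {smul : S → K → S} {m : ℝ} {π : S →+ V}
    (hω : IsGroupValuation ω) (hν0 : ν 0 = ⊤)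
    (hνsph : MCprime (fun x y : K => toDist (ν (x - y)))) (hπ : Function.Surjective π)
    (hs1 : ∀ x l, π (smul x l) = MulOpposite.op l • π x)
    (hs3 : ∀ (x : S) (k l : K), smul (smul x k) l = smul x (k * l)) (hs4 : ∀ x, smul x 1 = x)
    (hm : 0 < m) (hω2 : ∀ x l, ω (smul x l) = ω x + m * ν l)
    (hT : HasPseudoLimits ω {x | π x = 0}) (b : Module.Basis (Fin n) Kᵐᵒᵖ V) :
    ∀ j ≤ n, HasPseudoLimits ω ((kerCoordsFrom b j).toAddSubgroup.comap π) := by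
  intro j
  induction j with
  | zero =>
    intro _
    convert hT using 1
    ext x
    simp only [SetLike.mem_coe, AddSubgroup.mem_comap, Submodule.mem_toAddSubgroup,
      mem_kerCoordsFrom, Nat.zero_le, forall_const, b.forall_coord_eq_zero_iff, Set.mem_ofPred_eq]
  | succ j ih =>
    intro hj
    set i : Fin n := ⟨j, hj⟩
    obtain ⟨e, he⟩ := hπ (b i)
    let f : S →+ K := (MulOpposite.opAddEquiv.symm : Kᵐᵒᵖ ≃+ K).toAddMonoidHom.comp
      ((b.coord i).toAddMonoidHom.comp π)
    have hf0 : ∀ x, f x = 0 ↔ b.coord i (π x) = 0 := fun x => MulOpposite.unop_eq_zero_iff _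
    refine HasPseudoLimits.of_ker_of_smul hω hν0 hνsph hs3 hs4 hm hω2 (f := f) (e := e)
      (fun x hx l => ?_) (fun x l => ?_) ?_ ?_ ?_
    · change π (smul x l) ∈ kerCoordsFrom b (j + 1)
      rw [hs1]
      exact Submodule.smul_mem _ _ hx
    · change (b.coord i (π (smul x l))).unop = (b.coord i (π x)).unop * l
      rw [hs1, map_smul, smul_eq_mul, MulOpposite.unop_mul, MulOpposite.unop_op]
    · change π e ∈ kerCoordsFrom b (j + 1)
      exact he ▸ basis_mem_kerCoordsFrom_succ b i
    · change (b.coord i (π e)).unop = 1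
      rw [he, b.coord_apply, b.repr_self, Finsupp.single_eq_same, MulOpposite.unop_one]
    · convert ih (by omega) using 1
      ext x
      simp only [SetLike.mem_coe, AddSubgroup.mem_comap, Submodule.mem_toAddSubgroup,
        Set.mem_ofPred_eq, hf0, mem_kerCoordsFrom_iff_succ hj]
      rfl

end Coordinates

theorem extension_MCprime_general {K S V : Type*} [DivisionRing K] [AddGroup S]
    [AddCommGroup V] [Module Kᵐᵒᵖ V] [FiniteDimensional Kᵐᵒᵖ V]
    (ν : K → WithTop ℝ)
    (hν1 : ∀ x : K, ν x = ⊤ ↔ x = 0)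
    (hνsph : MCprime (fun x y : K => toDist (ν (x - y))))
    (π : S →+ V) (hπ : Function.Surjective π)
    (smul : S → K → S)
    (hs1 : ∀ (x : S) (l : K), π (smul x l) = MulOpposite.op l • π x)
    (hs3 : ∀ (x : S) (k l : K), smul (smul x k) l = smul x (k * l))
    (hs4 : ∀ x : S, smul x 1 = x)
    (m : ℝ) (hm : 0 < m)
    (ω : S → WithTop ℝ)
    (hω1 : ∀ x : S, ω x = ⊤ ↔ x = 0)
    (hω2 : ∀ (x : S) (l : K), ω (smul x l) = ω x + (m : WithTop ℝ) * ν l)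
    (hω3neg : ∀ x : S, ω (-x) = ω x)
    (hω3 : ∀ x y : S, min (ω x) (ω y) ≤ ω (x + y))
    (hMC : MCprimeOn (fun x y : S => toDist (ω (x + -y))) {x : S | π x = 0}) :
    MCprime (fun x y : S => toDist (ω (x + -y))) := by
  have hω : IsGroupValuation ω := ⟨hω1, hω3neg, hω3⟩
  have hS := hasPseudoLimits_comap_kerCoordsFrom hω ((hν1 0).2 rfl) hνsph hπ hs1 hs3 hs4 hm hω2
    (hω.hasPseudoLimits_of_mcprimeOn hMC) (Module.finBasis Kᵐᵒᵖ V) _ le_rfl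
  exact hω.mcprime_of_hasPseudoLimits (by convert hS using 1; ext; simp [mem_kerCoordsFrom])

/-- In the extension setup (a skew field `K` with a spherically complete
valuation `ν`, a not-necessarily-commutative additive group `S`, a right `K`-vector space `V`,
a surjective group homomorphism `π : S → V` with kernel `T′ = {x | π x = 0}`, a lifted scalar
action and a valuation-like map `ω`), if the metric subspace `(T′, d|_{T′×T′})` satisfies
(MC′) and `V` is finite-dimensional, then `(S, d)` satisfies (MC′). -/
theorem extension_MCprime {K S V : Type*} [DivisionRing K] [AddGroup S]
    [AddCommGroup V] [Module Kᵐᵒᵖ V] [FiniteDimensional Kᵐᵒᵖ V]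
    (ν : K → WithTop ℝ)
    (hν1 : ∀ x : K, ν x = ⊤ ↔ x = 0)
    (hνmul : ∀ x y : K, ν (x * y) = ν x + ν y)
    (hνadd : ∀ x y : K, min (ν x) (ν y) ≤ ν (x + y))
    (hνsph : MCprime (fun x y : K => toDist (ν (x - y))))
    (π : S →+ V) (hπ : Function.Surjective π)
    (smul : S → K → S)
    (hs1 : ∀ (x : S) (l : K), π (smul x l) = MulOpposite.op l • π x)
    (hs2 : ∀ (x y : S) (l : K), smul (x + y) l = smul x l + smul y l)
    (hs3 : ∀ (x : S) (k l : K), smul (smul x k) l = smul x (k * l))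
    (hs4 : ∀ x : S, smul x 1 = x)
    (m : ℝ) (hm : 0 < m)
    (ω : S → WithTop ℝ)
    (hω1 : ∀ x : S, ω x = ⊤ ↔ x = 0)
    (hω2 : ∀ (x : S) (l : K), ω (smul x l) = ω x + (m : WithTop ℝ) * ν l)
    (hω3neg : ∀ x : S, ω (-x) = ω x)
    (hω3 : ∀ x y : S, min (ω x) (ω y) ≤ ω (x + y))
    (hMC : MCprimeOn (fun x y : S => toDist (ω (x + -y))) {x : S | π x = 0}) :
    MCprime (fun x y : S => toDist (ω (x + -y))) :=
  extension_MCprime_general ν hν1 hνsph π hπ smul hs1 hs3 hs4 m hm ω hω1 hω2 hω3neg hω3 hMC
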